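/- Let Ψ : ℂ^d → ℂ^d be a real-linear map and Q : ℂ^d×ℂ^k → ℝ a real quadratic form such that: (i) the real-linear map (q,ξ) ↦ ∇_ξQ(q,ξ) from ℂ^d×ℂ^k to ℂ^k is surjective; and (ii) {(q, ∇_qQ(q,ξ)) : (q,ξ) with ∇_ξQ(q,ξ) = 0} = {((z+Ψ(z))/2, i·(z−Ψ(z))) : z ∈ ℂ^d}. Then the real dimension of the kernel of the gradient map ∇Q : ℂ^d×ℂ^k → ℂ^d×ℂ^k (which is real-linear since Q is quadratic) equals the real dimension of the kernel of Ψ − id. -/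

import Mathlib

noncomputable section
open Complex Function

abbrev Cd (d : ℕ) : Type := EuclideanSpace ℂ (Fin d)

/-- partial gradient with respect to the base variable q. -/
def gradQ {d k : ℕ} (F : Cd d × Cd k → ℝ) (p : Cd d × Cd k) : Cd d :=
  gradient (fun q => F (q, p.2)) p.1

/-- partial gradient with respect to the fiber variable ξ. -/
def gradXi {d k : ℕ} (F : Cd d × Cd k → ℝ) (p : Cd d × Cd k) : Cd k :=
  gradient (fun ξ => F (p.1, ξ)) p.2

/-!
Because `Q` is quadratic, its partial gradients `A = ∇_q Q` and `C = ∇_ξ Q` are linear, and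
hypothesis (ii) says that `(q, ξ) ↦ (q, A (q, ξ))` maps `ker C` onto `Λ = τ (graph Ψ)`.
Surjectivity of `C` makes `ker C` as large as `ℂ^d`, as is `Λ`; hence that map is injective on
`ker C`. Consequently `(q, ξ) ↦ q` is injective on `ker ∇Q = ker A ∩ ker C`, with image
`{q | (q, 0) ∈ Λ}`, and `τ (z, Ψ z) = (q, 0)` forces `Ψ z = z = q`.
-/

open LinearMap Module QuadraticMap

namespace QuadraticMap

section

variable {V : Type*} [NormedAddCommGroup V] [NormedSpace ℝ V] [FiniteDimensional ℝ V]

theorem hasFDerivAt (Q : QuadraticForm ℝ V) (x : V) :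
    HasFDerivAt Q (toContinuousLinearMap (polarBilin Q x)) x := by
  let B : V →L[ℝ] V →L[ℝ] ℝ :=
    toContinuousLinearMap (toContinuousLinearMap.toLinearMap ∘ₗ associated Q)
  have hQ : ⇑Q = fun v => B v v := funext fun v => (associated_eq_self_apply ℝ Q v).symm
  rw [hQ]
  refine (B.hasFDerivAt_of_bilinear (hasFDerivAt_id x) (hasFDerivAt_id x)).congr_fderiv ?_
  ext h
  simp [B, associated_apply, polar, add_comm h x]
  ring

variable {E : Type*} [NormedAddCommGroup E] [InnerProductSpace ℝ E] [CompleteSpace E]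

theorem inner_gradient_comp (Q : QuadraticForm ℝ V) {g : E → V} {g' : E →L[ℝ] V} {x : E}
    (hg : HasFDerivAt g g' x) (v : E) :
    inner ℝ (gradient (fun y => Q (g y)) x) v = polar Q (g x) (g' v) := by
  have h : HasGradientAt (fun y => Q (g y)) _ x := ((Q.hasFDerivAt (g x)).comp x hg).hasGradientAt
  rw [h.gradient, InnerProductSpace.toDual_symm_apply]
  rfl

end

section Partial

variable {E F : Type*} [NormedAddCommGroup E] [InnerProductSpace ℝ E] [FiniteDimensional ℝ E]
  [NormedAddCommGroup F] [InnerProductSpace ℝ F] [FiniteDimensional ℝ F]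
  (Q : QuadraticForm ℝ (E × F))

theorem inner_gradient_fst (p : E × F) (v : E) :
    inner ℝ (gradient (fun q => Q (q, p.2)) p.1) v = polar Q p (v, 0) :=
  Q.inner_gradient_comp (hasFDerivAt_prodMk_left p.1 p.2) v

theorem inner_gradient_snd (p : E × F) (v : F) :
    inner ℝ (gradient (fun ξ => Q (p.1, ξ)) p.2) v = polar Q p (0, v) :=
  Q.inner_gradient_comp (hasFDerivAt_prodMk_right p.1 p.2) v

def gradFst : E × F →ₗ[ℝ] E where
  toFun p := gradient (fun q => Q (q, p.2)) p.1
  map_add' a b := ext_inner_right ℝ fun v => by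
    simp only [inner_add_left, inner_gradient_fst, polar_add_left]
  map_smul' c a := ext_inner_right ℝ fun v => by
    simp only [inner_smul_left, inner_gradient_fst, polar_smul_left]
    simp

def gradSnd : E × F →ₗ[ℝ] F where
  toFun p := gradient (fun ξ => Q (p.1, ξ)) p.2
  map_add' a b := ext_inner_right ℝ fun v => by
    simp only [inner_add_left, inner_gradient_snd, polar_add_left]
  map_smul' c a := ext_inner_right ℝ fun v => by
    simp only [inner_smul_left, inner_gradient_snd, polar_smul_left]
    simp

end Partial

end QuadraticMap

theorem Submodule.finrank_map_of_disjoint_ker {R M N : Type*} [Field R] [AddCommGroup M]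
    [Module R M] [AddCommGroup N] [Module R N] (f : M →ₗ[R] N) {K : Submodule R M}
    (h : Disjoint K (ker f)) : finrank R (K.map f) = finrank R K := by
  rw [← range_domRestrict]
  exact finrank_range_of_inj (injective_domRestrict_iff.mpr h)

section Generating

variable {R E F : Type*} [Field R] [AddCommGroup E] [Module R E] [AddCommGroup F] [Module R F]

/-- For `A = ∇_q Q` and `C = ∇_ξ Q` this is the linear Lagrangian generated by `Q`. -/
def generatedSubspace (A : E × F →ₗ[R] E) (C : E × F →ₗ[R] F) : Submodule R (E × E) :=
  (ker C).map ((fst R E F).prod A)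

theorem coe_generatedSubspace (A : E × F →ₗ[R] E) (C : E × F →ₗ[R] F) :
    (generatedSubspace A C : Set (E × E)) = {p | ∃ q ξ, C (q, ξ) = 0 ∧ p = (q, A (q, ξ))} := by
  ext p
  simp [generatedSubspace, eq_comm]

theorem map_fst_ker_prod (A : E × F →ₗ[R] E) (C : E × F →ₗ[R] F) :
    (ker (A.prod C)).map (fst R E F) = (generatedSubspace A C).comap (inl R E E) := by
  ext q
  simp [generatedSubspace, and_comm]

variable [FiniteDimensional R E] [FiniteDimensional R F]

theorem finrank_ker_of_surjective {C : E × F →ₗ[R] F} (hC : Function.Surjective C) :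
    finrank R (ker C) = finrank R E := by
  have h := finrank_range_add_finrank_ker C
  rw [range_eq_top.mpr hC, finrank_top, finrank_prod] at h
  omega

theorem finrank_ker_prod_eq_finrank_comap_inl (A : E × F →ₗ[R] E) {C : E × F →ₗ[R] F}
    (hC : Function.Surjective C) (hdim : finrank R (generatedSubspace A C) = finrank R E) :
    finrank R (ker (A.prod C)) = finrank R ((generatedSubspace A C).comap (inl R E E)) := by
  -- `ker C` and its image both have the dimension of `E`.
  have hinj : Disjoint (ker C) (ker ((fst R E F).prod A)) :=
    Submodule.disjoint_ker_of_finrank_le _ (by rw [finrank_ker_of_surjective hC, ← hdim]; rfl)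
  have hfst : Disjoint (ker (A.prod C)) (ker (fst R E F)) := by
    refine Submodule.disjoint_def.mpr fun p hp hp1 => Submodule.disjoint_def.mp hinj p ?_ ?_
    · exact (Prod.ext_iff.mp hp).2
    · exact Prod.ext hp1 (Prod.ext_iff.mp hp).1
  rw [← map_fst_ker_prod, Submodule.finrank_map_of_disjoint_ker _ hfst]

end Generating

section Tau

variable {V : Type*} [AddCommGroup V] [Module ℂ V] [Module ℝ V] [IsScalarTower ℝ ℂ V]

def tau : V × V →ₗ[ℝ] V × V :=
  ((2⁻¹ : ℝ) • (fst ℝ V V + snd ℝ V V)).prod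
    (DistribSMul.toLinearMap ℝ V I ∘ₗ (fst ℝ V V - snd ℝ V V))

@[simp]
theorem tau_apply (p : V × V) : tau p = ((2⁻¹ : ℝ) • (p.1 + p.2), I • (p.1 - p.2)) := rfl

theorem tau_injective : Function.Injective (tau : V × V →ₗ[ℝ] V × V) := by
  rw [← ker_eq_bot, Submodule.eq_bot_iff]
  rintro ⟨z, Z⟩ h
  simp only [mem_ker, tau_apply, Prod.mk_eq_zero, smul_eq_zero, I_ne_zero, false_or] at h
  obtain ⟨h1, h2⟩ := h
  obtain rfl : z = Z := sub_eq_zero.mp h2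
  have h2z : (2 : ℝ) • z = 0 := by simpa [two_smul] using h1
  simpa using h2z

theorem coe_map_tau_graph (Ψ : V →ₗ[ℝ] V) :
    ((Ψ.graph.map tau : Submodule ℝ (V × V)) : Set (V × V)) =
      {p | ∃ z, p = ((2⁻¹ : ℝ) • (z + Ψ z), I • (z - Ψ z))} := by
  ext p
  simp [mem_graph_iff, eq_comm]

theorem comap_inl_map_tau_graph (Ψ : V →ₗ[ℝ] V) :
    (Ψ.graph.map tau).comap (inl ℝ V V) = ker (Ψ - LinearMap.id) := by
  ext q
  simp only [Submodule.mem_comap, coe_inl, Submodule.mem_map, mem_graph_iff, Prod.exists,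
    exists_eq_left, tau_apply, Prod.mk.injEq, smul_eq_zero, I_ne_zero, false_or, mem_ker,
    LinearMap.sub_apply, id_coe, id_eq]
  have half_add {z : V} (hz : Ψ z = z) : (2⁻¹ : ℝ) • (z + Ψ z) = z := by
    rw [hz, ← two_smul ℝ, smul_smul]
    norm_num
  constructor
  · rintro ⟨z, rfl, hz⟩
    have hΨ : Ψ z = z := (sub_eq_zero.mp hz).symm
    rw [half_add hΨ]
    exact sub_eq_zero.mpr hΨ
  · intro hq
    have hΨ : Ψ q = q := sub_eq_zero.mp hq
    exact ⟨q, half_add hΨ, sub_eq_zero.mpr hΨ.symm⟩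

theorem finrank_map_tau_graph [FiniteDimensional ℝ V] (Ψ : V →ₗ[ℝ] V) :
    finrank ℝ (Ψ.graph.map tau) = finrank ℝ V := by
  rw [graph_eq_range_prod, ← range_comp, finrank_range_of_inj]
  exact tau_injective.comp (fun _ _ h => congrArg Prod.fst h)

end Tau

theorem stmt13 (d k : ℕ) (Ψ : Cd d →ₗ[ℝ] Cd d) (Q : Cd d × Cd k → ℝ)
    (hquad : ∃ Q' : QuadraticForm ℝ (Cd d × Cd k), ∀ p, Q p = Q' p)
    (hsurj : Function.Surjective (fun p : Cd d × Cd k => gradXi Q p))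
    (hgen :
      {p : Cd d × Cd d | ∃ q ξ, gradXi Q (q, ξ) = 0 ∧ p = (q, gradQ Q (q, ξ))}
        = {p : Cd d × Cd d |
            ∃ z, p = ((2⁻¹ : ℝ) • (z + Ψ z), Complex.I • (z - Ψ z))}) :
    ∃ W : Submodule ℝ (Cd d × Cd k),
      (W : Set (Cd d × Cd k)) = {p | gradQ Q p = 0 ∧ gradXi Q p = 0} ∧
      Module.finrank ℝ W = Module.finrank ℝ (LinearMap.ker (Ψ - LinearMap.id)) := by
  obtain ⟨Q, rfl⟩ : ∃ Q' : QuadraticForm ℝ (Cd d × Cd k), Q = Q' :=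
    hquad.imp fun _ h => funext h
  have hΛ : generatedSubspace Q.gradFst Q.gradSnd = Ψ.graph.map tau :=
    SetLike.coe_injective (by rw [coe_generatedSubspace, coe_map_tau_graph]; exact hgen)
  refine ⟨ker (Q.gradFst.prod Q.gradSnd), ?_, ?_⟩
  · ext p
    exact Prod.mk_eq_zero
  · rw [finrank_ker_prod_eq_finrank_comap_inl (C := Q.gradSnd) _ hsurj
      (by rw [hΛ, finrank_map_tau_graph]), hΛ, comap_inl_map_tau_graph]
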